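/- For every positive integer m and every integer r with 0 ≤ r ≤ m−1, the 3-adic valuation of C(2m+1+r,3r) · C(2r,r) · C(3r,r) · 2^r · 3^{2m+1−2r} is at least 2 + s₃(m). -/
import Mathlib

open Nat

private instance fact3 : Fact (Nat.Prime 3) := ⟨by norm_num⟩

private lemma s_legendre (n : ℕ) :
    (Nat.digits 3 n).sum = n - 2 * padicValNat 3 (n !) := by
  have h := sub_one_mul_padicValNat_factorial (p := 3) n
  have h2 := Nat.digit_sum_le 3 n
  omega

private lemma s_subadd (a b : ℕ) :
    (Nat.digits 3 (a + b)).sum ≤ (Nat.digits 3 a).sum + (Nat.digits 3 b).sum := by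
  have hfac : (a + b)! = (a + b).choose a * a ! * b ! := by
    have := Nat.choose_mul_factorial_mul_factorial (Nat.le_add_right a b)
    simpa using this.symm
  have hv : padicValNat 3 ((a + b)!) =
      padicValNat 3 ((a + b).choose a) + padicValNat 3 (a !) + padicValNat 3 (b !) := by
    rw [hfac, padicValNat.mul (Nat.mul_ne_zero (Nat.choose_pos (Nat.le_add_right a b)).ne'
      (factorial_ne_zero a)) (factorial_ne_zero b),
      padicValNat.mul (Nat.choose_pos (Nat.le_add_right a b)).ne' (factorial_ne_zero a)]
  have h1 := s_legendre (a + b)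
  have h2 := s_legendre a
  have h3 := s_legendre b
  have h4 := Nat.digit_sum_le 3 a
  have h5 := Nat.digit_sum_le 3 b
  have h6 := Nat.digit_sum_le 3 (a + b)
  omega

private lemma s_mul3 (r : ℕ) :
    (Nat.digits 3 (3 * r)).sum = (Nat.digits 3 r).sum := by
  rcases Nat.eq_zero_or_pos r with h | h
  · simp [h]
  · rw [Nat.digits_def' (by norm_num : 1 < 3) (by positivity)]
    simp

theorem stmt_12 (m : ℕ) (hm : 0 < m) (r : ℕ) (hr : r ≤ m - 1) :
    2 + (Nat.digits 3 m).sum ≤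
      padicValNat 3 ((2 * m + 1 + r).choose (3 * r) * (2 * r).choose r * (3 * r).choose r *
        2 ^ r * 3 ^ (2 * m + 1 - 2 * r)) := by
  have hrm : r + 1 ≤ m := by omega
  set s : ℕ → ℕ := fun n => (Nat.digits 3 n).sum with hs
  have h31 : 3 * r ≤ 2 * m + 1 + r := by omega
  have hA := sub_one_mul_padicValNat_choose_eq_sub_sum_digits (p := 3) h31
  have hB := sub_one_mul_padicValNat_choose_eq_sub_sum_digits (p := 3)
    (Nat.le_mul_of_pos_left r (by norm_num) : r ≤ 2 * r)
  have hC := sub_one_mul_padicValNat_choose_eq_sub_sum_digits (p := 3)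
    (Nat.le_mul_of_pos_left r (by norm_num) : r ≤ 3 * r)
  have he1 : 2 * m + 1 + r - 3 * r = 2 * m + 1 - 2 * r := by omega
  have he2 : 2 * r - r = r := by omega
  have he3 : 3 * r - r = 2 * r := by omega
  rw [he1] at hA
  rw [he2] at hB
  rw [he3] at hC
  -- nonzero factors
  have hAne : (2 * m + 1 + r).choose (3 * r) ≠ 0 := (Nat.choose_pos h31).ne'
  have hBne : (2 * r).choose r ≠ 0 := (Nat.choose_pos (by omega)).ne'
  have hCne : (3 * r).choose r ≠ 0 := (Nat.choose_pos (by omega)).ne'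
  have h2ne : (2 : ℕ) ^ r ≠ 0 := by positivity
  have h3ne : (3 : ℕ) ^ (2 * m + 1 - 2 * r) ≠ 0 := by positivity
  rw [padicValNat.mul (by positivity) h3ne, padicValNat.mul (by positivity) h2ne,
    padicValNat.mul (by positivity) hCne, padicValNat.mul hAne hBne]
  have hv2 : padicValNat 3 (2 ^ r) = 0 := by
    apply padicValNat.eq_zero_of_not_dvd
    intro h
    have := Nat.Prime.dvd_of_dvd_pow (by norm_num : Nat.Prime 3) h
    omega
  have hv3 : padicValNat 3 (3 ^ (2 * m + 1 - 2 * r)) = 2 * m + 1 - 2 * r :=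
    padicValNat.prime_pow _
  rw [hv2, hv3]
  -- digit sum facts
  have hsub : (Nat.digits 3 (2 * m + 1 + r)).sum ≤
      (Nat.digits 3 (2 * m + 1 - 2 * r)).sum + (Nat.digits 3 (3 * r)).sum := by
    have := s_subadd (2 * m + 1 - 2 * r) (3 * r)
    have heq : 2 * m + 1 - 2 * r + 3 * r = 2 * m + 1 + r := by omega
    rwa [heq] at this
  have hm3 : (Nat.digits 3 (3 * r)).sum = (Nat.digits 3 r).sum := s_mul3 r
  have hmr : (Nat.digits 3 m).sum ≤ (Nat.digits 3 r).sum + (Nat.digits 3 (m - r)).sum := by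
    have := s_subadd r (m - r)
    have heq : r + (m - r) = m := by omega
    rwa [heq] at this
  have hmr2 := Nat.digit_sum_le 3 (m - r)
  omega
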